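/- Let X be a pre-Riesz space and let P and Q be band projections on X. Then the following assertions are equivalent: (i) PQ = 0; (ii) PX ∩ QX = {0}; (iii) every element of PX is disjoint to every element of QX. -/

import Mathlib

set_option linter.unusedSectionVars false

open Pointwise

variable {X : Type*} [AddCommGroup X] [PartialOrder X] [IsOrderedAddMonoid X] [Module ℝ X]
    [PosSMulStrictMono ℝ X]

/-- Two elements of an ordered vector space are disjoint if the sets `{x+y, -x-y}` and
`{x-y, y-x}` have the same set of upper bounds. -/
def UDisjoint (x y : X) : Prop :=
  upperBounds ({x + y, -x - y} : Set X) = upperBounds ({x - y, y - x} : Set X)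

/-- The disjoint complement `S^⊥` of a set `S`. -/
def dComp (S : Set X) : Set X := {x : X | ∀ s ∈ S, UDisjoint x s}

/-- A band: a set equal to its double disjoint complement. -/
def IsBand (B : Set X) : Prop := B = dComp (dComp B)

/-- A projection band: a band `B` with `B ∩ B^⊥ = {0}` and `B + B^⊥ = X`. -/
def IsProjBand (B : Set X) : Prop :=
  IsBand B ∧ B ∩ dComp B = {0} ∧ ∀ x : X, ∃ b ∈ B, ∃ c ∈ dComp B, x = b + c

/-- A positive linear operator. -/
def IsPosMap (T : X →ₗ[ℝ] X) : Prop := ∀ x : X, 0 ≤ x → 0 ≤ T x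

/-- A band projection: a linear projection whose range is a projection band and whose
kernel is the disjoint complement of the range. -/
def IsBandProj (P : X →ₗ[ℝ] X) : Prop :=
  P ∘ₗ P = P ∧ IsProjBand (Set.range ⇑P) ∧ (LinearMap.ker P : Set X) = dComp (Set.range ⇑P)

/-- A pre-Riesz space: for every nonempty finite `A ⊆ X` and every `x`, if the upper bounds
of `x + A` are contained in the upper bounds of `A`, then `x ≥ 0`. -/
def IsPreRiesz (X : Type*) [AddCommGroup X] [PartialOrder X] [IsOrderedAddMonoid X] [Module ℝ X]
    [PosSMulStrictMono ℝ X] : Prop :=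
  ∀ (A : Set X) (x : X), A.Finite → A.Nonempty →
    upperBounds ((x + ·) '' A) ⊆ upperBounds A → 0 ≤ x

/-!
In a pre-Riesz space, if `a ⊥ b` and `a + b ⊥ w` then `a ⊥ w`: the pre-Riesz condition for the
pair `{y, -y}` turns the comparison of upper bounds into the positivity of a single element.
Hence a band `B` contains `a` whenever `a ⊥ v - a` for some `v ∈ B`. For `v ∈ QX` this applies to
`a = Pv`, since `v - Pv ∈ ker P = (PX)^⊥`; so `Pv ∈ PX ∩ QX`, which gives (ii) ⇒ (i).
Conversely `PQ = 0` puts `QX` inside `ker P = (PX)^⊥`, and only `0` is disjoint to itself.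
-/

lemma udisjoint_iff {x y : X} :
    UDisjoint x y ↔ ∀ u, x + y ≤ u ∧ -x - y ≤ u ↔ x - y ≤ u ∧ y - x ≤ u := by
  simp only [UDisjoint, Set.ext_iff, upperBounds_insert, upperBounds_singleton,
    Set.mem_inter_iff, Set.mem_Ici]

lemma le_of_le_of_sub_eq_sub {a b c d : X} (h : a ≤ b) (e : d - c = b - a) : c ≤ d :=
  sub_nonneg.mp (e ▸ sub_nonneg.mpr h)

lemma UDisjoint.symm {x y : X} (h : UDisjoint x y) : UDisjoint y x := by
  rw [udisjoint_iff] at h ⊢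
  intro u
  rw [add_comm y x, neg_sub_comm y x, and_comm (a := y - x ≤ u)]
  exact h u

lemma UDisjoint.neg_right {x y : X} (h : UDisjoint x y) : UDisjoint x (-y) := by
  rw [udisjoint_iff] at h ⊢
  intro u
  rw [← sub_eq_add_neg, sub_neg_eq_add, neg_add_eq_sub, sub_neg_eq_add, neg_sub_comm y x]
  exact (h u).symm

lemma UDisjoint.neg_left {x y : X} (h : UDisjoint x y) : UDisjoint (-x) y :=
  h.symm.neg_right.symm

lemma eq_zero_of_udisjoint_self {z : X} (h : UDisjoint z z) : z = 0 := by
  obtain ⟨h₁, h₂⟩ := (udisjoint_iff.mp h 0).mpr (by simp)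
  have h₃ : (2 : ℝ) • z = 0 := by
    rw [two_smul]
    exact le_antisymm h₁ (le_of_le_of_sub_eq_sub h₂ (by abel))
  exact (smul_eq_zero.mp h₃).resolve_left two_ne_zero

namespace IsPreRiesz

lemma nonneg_of_forall_le_add {a b e : X} (hX : IsPreRiesz X)
    (h : ∀ u, a ≤ u → b ≤ u → a ≤ u + e ∧ b ≤ u + e) : 0 ≤ e := by
  refine hX {a - e, b - e} e (Set.toFinite _) (Set.insert_nonempty _ _) fun u hu ↦ ?_
  simp only [Set.image_insert_eq, Set.image_singleton, add_sub_cancel, mem_upperBounds,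
    Set.mem_insert_iff, Set.mem_singleton_iff, forall_eq_or_imp, forall_eq] at hu ⊢
  obtain ⟨ha, hb⟩ := h u hu.1 hu.2
  exact ⟨sub_le_iff_le_add.mpr ha, sub_le_iff_le_add.mpr hb⟩

lemma sub_le_of_udisjoint (hX : IsPreRiesz X) {x y w t : X} (hxy : UDisjoint x y)
    (hw : UDisjoint (x + y) w) (ht₁ : x + w ≤ t) (ht₂ : -x - w ≤ t) : x - w ≤ t := by
  -- with `e := t + w - x`, the claim is `0 ≤ e`, tested against the upper bounds of `±y`
  suffices 0 ≤ t + w - x from le_of_le_of_sub_eq_sub this (by abel)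
  refine hX.nonneg_of_forall_le_add (a := y) (b := -y) fun u hu₁ hu₂ ↦ ?_
  have hv₁ : x + y + w ≤ u + t := le_of_le_of_sub_eq_sub (add_le_add hu₁ ht₁) (by abel)
  have hv₂ : -(x + y) - w ≤ u + t := le_of_le_of_sub_eq_sub (add_le_add hu₂ ht₂) (by abel)
  have hv₃ := (((udisjoint_iff.mp hw) (u + t)).mp ⟨hv₁, hv₂⟩).1
  have hw₁ : x + y ≤ u + t + w := le_of_le_of_sub_eq_sub hv₃ (by abel)
  have hw₂ : -x - y ≤ u + t + w := le_of_le_of_sub_eq_sub hv₂ (by abel)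
  have hw₃ := (((udisjoint_iff.mp hxy) (u + t + w)).mp ⟨hw₁, hw₂⟩).1
  exact ⟨le_of_le_of_sub_eq_sub hv₃ (by abel), le_of_le_of_sub_eq_sub hw₃ (by abel)⟩

lemma udisjoint_of_udisjoint_add (hX : IsPreRiesz X) {a b w : X} (hab : UDisjoint a b)
    (hw : UDisjoint (a + b) w) : UDisjoint a w := by
  have half : ∀ c, UDisjoint (a + b) c →
      ∀ t, a + c ≤ t ∧ -a - c ≤ t → a - c ≤ t ∧ c - a ≤ t := by
    rintro c hc t ⟨ht₁, ht₂⟩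
    have hc' : UDisjoint (-a + -b) (-c) := by simpa only [neg_add] using hc.neg_left.neg_right
    refine ⟨hX.sub_le_of_udisjoint hab hc ht₁ ht₂, ?_⟩
    have := hX.sub_le_of_udisjoint (t := t) hab.neg_left.neg_right hc'
      (by rwa [← sub_eq_add_neg]) (by rwa [neg_neg, sub_neg_eq_add])
    rwa [sub_neg_eq_add, neg_add_eq_sub] at this
  refine udisjoint_iff.mpr fun t ↦ ⟨half w hw t, fun ht ↦ ?_⟩
  -- the converse is the forward direction for the pair `(a, -w)`
  have := half (-w) hw.neg_right t (by rwa [← sub_eq_add_neg, sub_neg_eq_add, neg_add_eq_sub])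
  rwa [sub_neg_eq_add, neg_sub_comm] at this

lemma mem_of_udisjoint_sub (hX : IsPreRiesz X) {B : Set X} (hB : IsBand B) {v a : X}
    (hv : v ∈ B) (ha : UDisjoint a (v - a)) : a ∈ B := by
  rw [hB]
  intro w hw
  have hvw : UDisjoint (a + (v - a)) w := by
    rw [add_sub_cancel]
    exact (hB ▸ hv : v ∈ dComp (dComp B)) w hw
  exact hX.udisjoint_of_udisjoint_add ha hvw

end IsPreRiesz

lemma udisjoint_apply_sub_apply {P : X →ₗ[ℝ] X} (hPP : P ∘ₗ P = P)
    (hker : (LinearMap.ker P : Set X) ⊆ dComp (Set.range P)) (v : X) :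
    UDisjoint (P v) (v - P v) := by
  have hv : v - P v ∈ LinearMap.ker P := by
    rw [LinearMap.mem_ker, map_sub, ← LinearMap.comp_apply, hPP, sub_self]
  exact (hker hv (P v) ⟨v, rfl⟩).symm

/-- For band projections `P` and `Q`: `PQ = 0` iff `PX ∩ QX = {0}` iff `PX ⊥ QX`. -/
theorem stmt_11 (hX : IsPreRiesz X) (P Q : X →ₗ[ℝ] X)
    (hP : IsBandProj P) (hQ : IsBandProj Q) :
    [P ∘ₗ Q = 0,
     Set.range ⇑P ∩ Set.range ⇑Q = {0},
     ∀ x ∈ Set.range ⇑P, ∀ y ∈ Set.range ⇑Q, UDisjoint x y].TFAE := by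
  obtain ⟨hPP, -, hPker⟩ := hP
  obtain ⟨-, ⟨hQband, -⟩, -⟩ := hQ
  tfae_have 1 → 3 := by
    rintro h x hx _ ⟨z, rfl⟩
    have hQz : Q z ∈ dComp (Set.range P) := hPker ▸ LinearMap.congr_fun h z
    exact (hQz x hx).symm
  tfae_have 3 → 2 := fun h ↦ Set.eq_singleton_iff_unique_mem.mpr
    ⟨⟨⟨0, map_zero P⟩, ⟨0, map_zero Q⟩⟩, fun z hz ↦ eq_zero_of_udisjoint_self (h z hz.1 z hz.2)⟩
  tfae_have 2 → 1 := by
    intro h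
    ext z
    have hPQz : P (Q z) ∈ Set.range Q :=
      hX.mem_of_udisjoint_sub hQband ⟨z, rfl⟩ (udisjoint_apply_sub_apply hPP hPker.le (Q z))
    exact h.subset ⟨⟨Q z, rfl⟩, hPQz⟩
  tfae_finish
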